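/- Let ε ∈ (0,1), let ε_1 > ε, let K ≥ 1 be an integer, and partition ℕ = {1,2,…} into consecutive intervals I_1, I_2, … where I_r has length r²·K (so I_1 = {1,…,K}, I_2 = {K+1,…,5K}, etc.). If b ∈ {0,1}^ω is ε-weakly sparse, then for infinitely many r the fraction of 1-entries of b in I_r, namely α_r := (Σ_{i ∈ I_r} b_i)/|I_r|, satisfies α_r ≤ ε_1. -/

import Mathlib

/-!
If every interval `I_r` from some point on had density of ones above `ε₁`, summing over blocks
would give `N_{L_r} ≥ ε₁ (L_r - C)` at the block ends `L_r = |I_1| + ⋯ + |I_r|`. Since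
`|I_{r+1}| = (r+1)²K` is only an `O(1/r)` fraction of `L_{r+1} ≍ r³K`, monotonicity of `N_t`
between consecutive block ends turns this into `N_t / t ≥ δ` for all large `t`, for every
`δ < ε₁`, contradicting `liminf N_t / t ≤ ε < ε₁`.
-/

/-- `cars b t` is `N_t(b) = b_1 + ⋯ + b_t` (sequences are 0-indexed: `b i` is `b_{i+1}`). -/
def cars (b : ℕ → Bool) (t : ℕ) : ℕ :=
  ((Finset.range t).filter (fun i => b i = true)).card

/-- `b` is `ε`-weakly sparse if `lim_{s→∞} inf_{t ≥ s} N_t(b)/t ≤ ε`. -/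
def epsWeaklySparse (ε : ℝ) (b : ℕ → Bool) : Prop :=
  Filter.liminf (fun t : ℕ => (cars b t : ℝ) / t) Filter.atTop ≤ ε

/-- `cumLen K r` is the total length `K·(1² + 2² + ⋯ + r²)` of the first `r` intervals
`I_1, …, I_r`, where `I_j` has length `j²·K`.  The interval `I_{r+1}` thus occupies the
0-indexed positions `[cumLen K r, cumLen K (r+1))`. -/
def cumLen (K r : ℕ) : ℕ := K * ∑ j ∈ Finset.range (r + 1), j ^ 2

open Filter Topology

lemma cube_le_three_mul_sum_range_sq (n : ℕ) :
    n ^ 3 ≤ 3 * ∑ j ∈ Finset.range (n + 1), j ^ 2 := by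
  induction n with
  | zero => simp
  | succ n ih =>
    rw [Finset.sum_range_succ]
    have hcube : (n + 1) ^ 3 = n ^ 3 + 3 * n ^ 2 + 3 * n + 1 := by ring
    have hsq : 3 * (n + 1) ^ 2 = 3 * n ^ 2 + 6 * n + 3 := by ring
    omega

lemma cumLen_succ (K r : ℕ) : cumLen K (r + 1) = cumLen K r + K * (r + 1) ^ 2 := by
  rw [cumLen, Finset.sum_range_succ, Nat.mul_add, ← cumLen]

lemma cast_cumLen_succ_sub (K r : ℕ) :
    (cumLen K (r + 1) : ℝ) - cumLen K r = K * ((r : ℝ) + 1) ^ 2 := by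
  rw [cumLen_succ]
  push_cast
  ring

lemma cumLen_strictMono {K : ℕ} (hK : 1 ≤ K) : StrictMono (cumLen K) :=
  strictMono_nat_of_lt_succ fun r => by
    rw [cumLen_succ]
    exact Nat.lt_add_of_pos_right (Nat.mul_pos hK (by positivity))

lemma tendsto_cumLen_gap (K : ℕ) :
    Tendsto (fun r => ((cumLen K (r + 1) : ℝ) - cumLen K r) / cumLen K (r + 1))
      atTop (𝓝 0) := by
  have hbound : ∀ r : ℕ,
      ((cumLen K (r + 1) : ℝ) - cumLen K r) / cumLen K (r + 1) ≤ 3 * (1 / ((r : ℝ) + 1)) := by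
    intro r
    have hcube : (K : ℝ) * ((r : ℝ) + 1) ^ 3 ≤ 3 * cumLen K (r + 1) := by
      have := Nat.mul_le_mul_left K (cube_le_three_mul_sum_range_sq (r + 1))
      rw [mul_left_comm, ← cumLen] at this
      exact_mod_cast this
    rw [cast_cumLen_succ_sub]
    refine div_le_of_le_mul₀ (by positivity) (by positivity) ?_
    rw [mul_one_div, div_mul_eq_mul_div, le_div_iff₀ (by positivity)]
    calc (K : ℝ) * ((r : ℝ) + 1) ^ 2 * ((r : ℝ) + 1) = K * ((r : ℝ) + 1) ^ 3 := by ring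
      _ ≤ 3 * (cumLen K (r + 1) : ℝ) := hcube
  have hnonneg : ∀ r : ℕ, 0 ≤ ((cumLen K (r + 1) : ℝ) - cumLen K r) / cumLen K (r + 1) :=
    fun r => by rw [cast_cumLen_succ_sub]; positivity
  have hlim := (tendsto_one_div_add_atTop_nhds_zero_nat (𝕜 := ℝ)).const_mul 3
  rw [mul_zero] at hlim
  exact tendsto_of_tendsto_of_tendsto_of_le_of_le tendsto_const_nhds hlim hnonneg hbound

lemma cars_eq_add_card_filter_Ico (b : ℕ → Bool) {m n : ℕ} (h : m ≤ n) :
    cars b n = cars b m + ((Finset.Ico m n).filter (fun i => b i = true)).card := by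
  unfold cars
  rw [Finset.range_eq_Ico, ← Finset.Ico_union_Ico_eq_Ico (Nat.zero_le m) h,
    Finset.filter_union, Finset.card_union_of_disjoint, ← Finset.range_eq_Ico]
  exact Finset.disjoint_filter_filter (Finset.Ico_disjoint_Ico_consecutive 0 m n)

lemma cars_mono (b : ℕ → Bool) : Monotone (cars b) := fun m n h => by
  rw [cars_eq_add_card_filter_Ico b h]
  exact Nat.le_add_right _ _

lemma cars_div_le_one (b : ℕ → Bool) (t : ℕ) : (cars b t : ℝ) / t ≤ 1 := by
  refine div_le_one_of_le₀ ?_ t.cast_nonneg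
  exact_mod_cast (Finset.card_filter_le _ _).trans_eq (Finset.card_range t)

lemma epsWeaklySparse.frequently_cars_div_lt {ε δ : ℝ} {b : ℕ → Bool}
    (hb : epsWeaklySparse ε b) (hδ : ε < δ) : ∃ᶠ t in atTop, (cars b t : ℝ) / t < δ :=
  frequently_lt_of_liminf_lt (isBoundedUnder_of ⟨1, cars_div_le_one b⟩).isCoboundedUnder_ge
    (hb.trans_lt hδ)

section Blocks

variable {f L : ℕ → ℕ}

lemma eventually_le_div_of_blocks (hf : Monotone f) (hL : StrictMono L) {δ : ℝ}
    (h : ∀ᶠ r in atTop, δ ≤ (f (L r) : ℝ) / L (r + 1)) :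
    ∀ᶠ t in atTop, δ ≤ (f t : ℝ) / t := by
  obtain ⟨r₀, hr₀⟩ := eventually_atTop.1 h
  filter_upwards [eventually_ge_atTop (L r₀), eventually_gt_atTop 0] with t ht ht0
  have hL0 : L 0 < t + 1 := Nat.lt_succ_of_le ((hL.monotone (Nat.zero_le r₀)).trans ht)
  obtain ⟨r, hrt, htr⟩ := hL.exists_between_of_tendsto_atTop hL.tendsto_atTop hL0
  have hr : r₀ ≤ r := Nat.lt_succ_iff.1 (hL.lt_iff_lt.1 (by omega : L r₀ < L (r + 1)))
  calc δ ≤ (f (L r) : ℝ) / L (r + 1) := hr₀ r hr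
    _ ≤ (f t : ℝ) / t :=
      div_le_div₀ (Nat.cast_nonneg _) (by exact_mod_cast hf (by omega)) (by exact_mod_cast ht0)
        (by exact_mod_cast (by omega : t ≤ L (r + 1)))

lemma tendsto_sub_div_succ_of_gap (hL : StrictMono L)
    (hgap : Tendsto (fun r => ((L (r + 1) : ℝ) - L r) / L (r + 1)) atTop (𝓝 0)) (a : ℝ) :
    Tendsto (fun r => ((L r : ℝ) - a) / L (r + 1)) atTop (𝓝 1) := by
  have hpos : ∀ r, (0 : ℝ) < L (r + 1) := fun r =>
    Nat.cast_pos.2 ((Nat.zero_le _).trans_lt (hL r.lt_succ_self))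
  have hinv : Tendsto (fun r => a / (L (r + 1) : ℝ)) atTop (𝓝 0) :=
    tendsto_const_nhds.div_atTop <|
      tendsto_natCast_atTop_atTop.comp (hL.tendsto_atTop.comp (tendsto_add_atTop_nat 1))
  have hsplit : ∀ r, ((L r : ℝ) - a) / L (r + 1)
      = 1 - ((L (r + 1) : ℝ) - L r) / L (r + 1) - a / L (r + 1) := fun r => by
    field_simp [(hpos r).ne']
    ring
  simpa [hsplit] using (tendsto_const_nhds.sub hgap).sub hinv

lemma eventually_le_div_of_block_density (hf : Monotone f) (hL : StrictMono L)
    (hgap : Tendsto (fun r => ((L (r + 1) : ℝ) - L r) / L (r + 1)) atTop (𝓝 0))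
    {c δ : ℝ} (hδ : δ < c) {R : ℕ}
    (hblock : ∀ r ≥ R, c * ((L (r + 1) : ℝ) - L r) ≤ (f (L (r + 1)) : ℝ) - f (L r)) :
    ∀ᶠ t in atTop, δ ≤ (f t : ℝ) / t := by
  have hcum : ∀ r ≥ R, c * ((L r : ℝ) - L R) ≤ f (L r) := by
    have htele : ∀ r ≥ R, c * ((L r : ℝ) - L R) ≤ (f (L r) : ℝ) - f (L R) := by
      intro r hr
      induction r, hr using Nat.le_induction with
      | base => simp
      | succ r hr ih => linarith [hblock r hr]
    exact fun r hr => (htele r hr).trans (sub_le_self _ (Nat.cast_nonneg _))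
  have hlim : Tendsto (fun r => c * (((L r : ℝ) - L R) / L (r + 1))) atTop (𝓝 c) := by
    simpa using (tendsto_sub_div_succ_of_gap hL hgap (L R)).const_mul c
  refine eventually_le_div_of_blocks hf hL ?_
  filter_upwards [hlim.eventually_const_lt hδ, eventually_ge_atTop R] with r hlt hr
  rw [← mul_div_assoc] at hlt
  exact hlt.le.trans (div_le_div_of_nonneg_right (hcum r hr) (Nat.cast_nonneg _))

end Blocks

theorem infinitely_many_light_intervals (ε ε₁ : ℝ)
    (hε₁ : ε < ε₁) (K : ℕ) (hK : 1 ≤ K) (b : ℕ → Bool) (hb : epsWeaklySparse ε b) :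
    ∀ R : ℕ, ∃ r : ℕ, R ≤ r ∧
      ((((Finset.Ico (cumLen K r) (cumLen K (r + 1))).filter
          (fun i => b i = true)).card : ℝ) / ((r + 1) ^ 2 * K) ≤ ε₁) := by
  intro R
  by_contra! hheavy
  have hblock : ∀ r ≥ R, ε₁ * ((cumLen K (r + 1) : ℝ) - cumLen K r)
      ≤ (cars b (cumLen K (r + 1)) : ℝ) - cars b (cumLen K r) := by
    intro r hr
    have hdensity := hheavy r hr
    rw [lt_div_iff₀ (by positivity)] at hdensity
    rw [cars_eq_add_card_filter_Ico b ((cumLen_strictMono hK).monotone r.le_succ), Nat.cast_add,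
      add_sub_cancel_left, cast_cumLen_succ_sub]
    linarith
  have hsparse := hb.frequently_cars_div_lt (left_lt_add_div_two.2 hε₁)
  have hdense := eventually_le_div_of_block_density (cars_mono b) (cumLen_strictMono hK)
    (tendsto_cumLen_gap K) (add_div_two_lt_right.2 hε₁) hblock
  obtain ⟨t, hlow, hhigh⟩ := (hsparse.and_eventually hdense).exists
  linarith
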